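/- arXiv:2602.01506 — 3 statements merged into one kernel-verified Lean document; each statement's English description precedes it below -/
import Mathlib

section
/- Let v, s : ℝ × ℝ → ℝ be differentiable functions of (x, t), let k_s, k_v, τ, L be real constants, and let x : ℝ → ℝ be a differentiable trajectory with x′(t) = v(x(t), t) for all t. Suppose that along the trajectory the ACC control law holds: d/dt [v(x(t), t)] = k_s ( s(x(t), t) − τ v(x(t), t) − L ) + k_v · d/dt [ s(x(t), t) ], and that the spacing conservation identity ∂ₜs + v ∂ₓs = s ∂ₓv holds at (x(t), t). Then the momentum equation ∂ₜv + (v − k_v s) ∂ₓv + (τ v + L − s) k_s = 0 holds at (x(t), t). -/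
/-! The material derivative of a field along a trajectory with `x' = v` is `∂ₜ + v ∂ₓ`.
Substituting this into the ACC law turns `d/dt s` into `∂ₜs + v ∂ₓs`, which spacing
conservation replaces by `s ∂ₓv`; what remains is the momentum equation. -/

section MaterialDerivative

variable {𝕜 F : Type*} [NontriviallyNormedField 𝕜] [NormedAddCommGroup F] [NormedSpace 𝕜 F]

theorem DifferentiableAt.hasDerivAt_comp_prodMk_id {f : 𝕜 × 𝕜 → F} {x : 𝕜 → 𝕜} {c t : 𝕜}
    (hf : DifferentiableAt 𝕜 f (x t, t)) (hx : HasDerivAt x c t) :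
    HasDerivAt (fun u => f (x u, u))
      (c • fderiv 𝕜 f (x t, t) (1, 0) + fderiv 𝕜 f (x t, t) (0, 1)) t := by
  have hdir : ((c, 1) : 𝕜 × 𝕜) = c • ((1, 0) : 𝕜 × 𝕜) + (0, 1) := by simp
  have hcomp := hf.hasFDerivAt.comp_hasDerivAt (f := fun u => (x u, u)) t
    (hx.prodMk (hasDerivAt_id t))
  rwa [hdir, map_add, map_smul] at hcomp

theorem DifferentiableAt.deriv_comp_prodMk_id {f : 𝕜 × 𝕜 → F} {x : 𝕜 → 𝕜} {c t : 𝕜}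
    (hf : DifferentiableAt 𝕜 f (x t, t)) (hx : HasDerivAt x c t) :
    deriv (fun u => f (x u, u)) t
      = c • fderiv 𝕜 f (x t, t) (1, 0) + fderiv 𝕜 f (x t, t) (0, 1) :=
  (hf.hasDerivAt_comp_prodMk_id hx).deriv

end MaterialDerivative

/-- Derivation of the ACC momentum equation (Proposition 1).
Let `v` and `s` be differentiable speed and spacing fields, and let `x` be a
vehicle trajectory with `x'(t) = v(x(t), t)`.  If the linear ACC feedback law
`d/dt v(x(t),t) = k_s (s - τ v - L) + k_v d/dt s(x(t),t)` holds along the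
trajectory, and the spacing conservation identity `∂ₜs + v ∂ₓs = s ∂ₓv` holds
at `(x(t), t)`, then the momentum equation
`∂ₜv + (v - k_v s) ∂ₓv + (τ v + L - s) k_s = 0` holds at `(x(t), t)`.
Here a point of `ℝ × ℝ` is `(x, t)`, `∂ₓ f p = fderiv ℝ f p (1, 0)` and
`∂ₜ f p = fderiv ℝ f p (0, 1)`. -/
theorem acc_momentum_equation
    (v s : ℝ × ℝ → ℝ) (k_s k_v τ L : ℝ) (x : ℝ → ℝ)
    (hv : Differentiable ℝ v) (hs : Differentiable ℝ s)
    (hx : ∀ t, HasDerivAt x (v (x t, t)) t)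
    (hacc : ∀ t, deriv (fun u => v (x u, u)) t
        = k_s * (s (x t, t) - τ * v (x t, t) - L)
          + k_v * deriv (fun u => s (x u, u)) t)
    (hcons : ∀ t, fderiv ℝ s (x t, t) (0, 1)
        + v (x t, t) * fderiv ℝ s (x t, t) (1, 0)
      = s (x t, t) * fderiv ℝ v (x t, t) (1, 0)) :
    ∀ t, fderiv ℝ v (x t, t) (0, 1)
        + (v (x t, t) - k_v * s (x t, t)) * fderiv ℝ v (x t, t) (1, 0)
        + (τ * v (x t, t) + L - s (x t, t)) * k_s = 0 := by
  intro t
  have hacc_t := hacc t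
  rw [(hv _).deriv_comp_prodMk_id (hx t), (hs _).deriv_comp_prodMk_id (hx t)] at hacc_t
  simp only [smul_eq_mul] at hacc_t
  linear_combination hacc_t + k_v * hcons t
end

section
/- Let k_v : ℝ → ℝ be a differentiable function of density ρ alone, and on {(ρ, v) : ρ > 0} define λ₂(ρ, v) = v − k_v(ρ)/ρ and r₂(ρ, v) = (1, −k_v(ρ)/ρ²). Then for every ρ > 0 and v ∈ ℝ, ∇λ₂(ρ, v) · r₂(ρ, v) = −k_v′(ρ)/ρ. Consequently, the second characteristic field is genuinely nonlinear at every state (ρ, v) with k_v′(ρ) ≠ 0. -/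
theorem HasDerivAt.fderiv_snd_sub_comp_fst_apply {𝕜 : Type*} [NontriviallyNormedField 𝕜]
    {g : 𝕜 → 𝕜} {g' x : 𝕜} (hg : HasDerivAt g g' x) (y a b : 𝕜) :
    fderiv 𝕜 (fun p : 𝕜 × 𝕜 => p.2 - g p.1) (x, y) (a, b) = b - a * g' := by
  have hcomp : HasFDerivAt (fun p : 𝕜 × 𝕜 => g p.1)
      ((ContinuousLinearMap.smulRight (1 : 𝕜 →L[𝕜] 𝕜) g').comp
        (ContinuousLinearMap.fst 𝕜 𝕜 𝕜)) (x, y) :=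
    hg.hasFDerivAt.comp (x, y) hasFDerivAt_fst
  have hsub : HasFDerivAt (fun p : 𝕜 × 𝕜 => p.2 - g p.1) _ (x, y) :=
    hasFDerivAt_snd.sub hcomp
  rw [hsub.fderiv]
  simp

/-- With a density-dependent gain `k_v(ρ)`, the second characteristic field
`λ₂(ρ,v) = v - k_v(ρ)/ρ`, `r₂(ρ,v) = (1, -k_v(ρ)/ρ²)` of the ACC-embedded
traffic flow model satisfies `∇λ₂ · r₂ = -k_v'(ρ)/ρ` for every `ρ > 0` and `v`;
consequently the field is genuinely nonlinear (`∇λ₂ · r₂ ≠ 0`) at every state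
where `k_v'(ρ) ≠ 0`. -/
theorem acc_density_dependent_gain_genuinely_nonlinear
    (k_v : ℝ → ℝ) (hk : Differentiable ℝ k_v) :
    ∀ ρ v : ℝ, 0 < ρ →
      fderiv ℝ (fun p : ℝ × ℝ => p.2 - k_v p.1 / p.1) (ρ, v)
          (1, -k_v ρ / ρ ^ 2)
        = -(deriv k_v ρ) / ρ ∧
      (deriv k_v ρ ≠ 0 →
        fderiv ℝ (fun p : ℝ × ℝ => p.2 - k_v p.1 / p.1) (ρ, v)
          (1, -k_v ρ / ρ ^ 2) ≠ 0) := by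
  intro ρ v hρ
  have hρ0 : ρ ≠ 0 := hρ.ne'
  have hquot : HasDerivAt (fun x => k_v x / x)
      ((deriv k_v ρ * ρ - k_v ρ * 1) / ρ ^ 2) ρ :=
    (hk ρ).hasDerivAt.div (hasDerivAt_id ρ) hρ0
  -- The contributions of `k_v ρ` itself cancel, leaving only the variation of the gain.
  have hcancel : -k_v ρ / ρ ^ 2 - 1 * ((deriv k_v ρ * ρ - k_v ρ * 1) / ρ ^ 2)
      = -deriv k_v ρ / ρ := by
    field_simp
    ring
  have key := hquot.fderiv_snd_sub_comp_fst_apply v 1 (-k_v ρ / ρ ^ 2)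
  rw [hcancel] at key
  exact ⟨key, fun hne => key ▸ div_ne_zero (neg_ne_zero.mpr hne) hρ0⟩
end

section
/- Let τ > 0, L > 0, and let v_l, v_r be real numbers with v_l ≠ v_r, τ v_l + L > 0 and τ v_r + L > 0. Define the densities ρ_l = 1/(τ v_l + L) and ρ_r = 1/(τ v_r + L). Then ρ_l ≠ ρ_r, and the Rankine–Hugoniot shock speed for the mass equation satisfies (ρ_r v_r − ρ_l v_l)/(ρ_r − ρ_l) = −L/τ. -/
/-! On the headway relation `s = τ v + L` the flux is affine in the density:
`ρ v = (1 - L ρ) / τ`. The Rankine–Hugoniot quotient of an affine flux is its slope,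
here `-L / τ`. -/

theorem rankine_hugoniot_speed_of_affine_flux {K : Type*} [Field K] (a b ρ_l ρ_r : K)
    (hρ : ρ_r ≠ ρ_l) :
    ((a + b * ρ_r) - (a + b * ρ_l)) / (ρ_r - ρ_l) = b := by
  rw [add_sub_add_left_eq_sub, ← mul_sub, mul_div_cancel_right₀ b (sub_ne_zero.2 hρ)]

theorem headway_flux_eq_affine {K : Type*} [Field K] {τ L v : K} (hτ : τ ≠ 0)
    (hs : τ * v + L ≠ 0) :
    1 / (τ * v + L) * v = 1 / τ + (-L / τ) * (1 / (τ * v + L)) := by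
  field_simp
  ring

theorem headway_ne_of_speed_ne {K : Type*} [Field K] {τ L v_l v_r : K} (hτ : τ ≠ 0)
    (hne : v_l ≠ v_r) :
    τ * v_l + L ≠ τ * v_r + L := by
  rw [Ne, add_left_inj, mul_right_inj' hτ]
  exact hne

theorem rankine_hugoniot_shock_speed_general
    (τ L v_l v_r : ℝ) (hτ : 0 < τ) (hne : v_l ≠ v_r)
    (hl : 0 < τ * v_l + L) (hr : 0 < τ * v_r + L) :
    (1 : ℝ) / (τ * v_l + L) ≠ 1 / (τ * v_r + L) ∧
    ((1 / (τ * v_r + L)) * v_r - (1 / (τ * v_l + L)) * v_l)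
        / ((1 / (τ * v_r + L)) - (1 / (τ * v_l + L))) = -L / τ := by
  have hρ : (1 : ℝ) / (τ * v_l + L) ≠ 1 / (τ * v_r + L) := by
    rw [Ne, one_div, one_div, inv_inj]
    exact headway_ne_of_speed_ne hτ.ne' hne
  refine ⟨hρ, ?_⟩
  rw [headway_flux_eq_affine hτ.ne' hl.ne', headway_flux_eq_affine hτ.ne' hr.ne']
  exact rankine_hugoniot_speed_of_affine_flux _ _ _ _ hρ.symm

/-- Rankine–Hugoniot shock speed across the cruise-to-control transition.  For
steady states on the constant time-headway manifold, with densities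
`ρ_l = 1/(τ v_l + L)` and `ρ_r = 1/(τ v_r + L)` and `v_l ≠ v_r`, the densities
are distinct and the shock speed `(ρ_r v_r - ρ_l v_l)/(ρ_r - ρ_l)` equals
`-L/τ`. -/
theorem rankine_hugoniot_shock_speed
    (τ L v_l v_r : ℝ) (hτ : 0 < τ) (hL : 0 < L) (hne : v_l ≠ v_r)
    (hl : 0 < τ * v_l + L) (hr : 0 < τ * v_r + L) :
    (1 : ℝ) / (τ * v_l + L) ≠ 1 / (τ * v_r + L) ∧
    ((1 / (τ * v_r + L)) * v_r - (1 / (τ * v_l + L)) * v_l)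
        / ((1 / (τ * v_r + L)) - (1 / (τ * v_l + L))) = -L / τ :=
  rankine_hugoniot_shock_speed_general τ L v_l v_r hτ hne hl hr
end
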